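/- Let G be a countable ICC group and μ an irreducible probability measure on G with μ(e) > 0. Then for any finite subset F ⊆ G, the probability that w_n is F-switching tends to 1 as n → ∞, where (w_n) is the μ-random walk. -/

import Mathlib

set_option maxHeartbeats 1000000
open MeasureTheory ProbabilityTheory Filter

lemma core_real {G X : Type*} [Group G] [Countable X]
    (hX : Infinite X)
    (act : X → G → X) (hact1 : ∀ x, act x 1 = x)
    (hactm : ∀ x g h, act (act x g) h = act x (g * h))
    (htrans : ∀ x y, ∃ g, act x g = y)
    (w : G → ℝ) (hw0 : ∀ g, 0 ≤ w g) (hwsum : Summable w) (hwtot : ∑' g, w g = 1)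
    (hw1 : 0 < w 1)
    (hgen : ∀ g : G, g ∈ Subgroup.closure {g : G | 0 < w g})
    (f : ℕ → X → ℝ) (hf0 : ∀ n x, 0 ≤ f n x) (hfsum : ∀ n, Summable (f n))
    (hfle : ∀ n, ∑' x, f n x ≤ 1)
    (hrec : ∀ n x, f (n + 1) x = ∑' g, w g * f n (act x g⁻¹)) (x₀ : X) :
    Tendsto (fun n => f n x₀) atTop (nhds 0) := by
  classical
  have hfb : ∀ n x, f n x ≤ 1 := fun n x =>
    le_trans (Summable.le_tsum (hfsum n) x fun _ _ => hf0 _ _) (hfle n)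
  have hactinj : ∀ g : G, Function.Injective (fun x => act x g) := by
    intro g x y hxy
    have h2 : act (act x g) g⁻¹ = act (act y g) g⁻¹ := by simp only at hxy; rw [hxy]
    simpa [hactm, hact1] using h2
  -- Φ k n : sup of sums over finsets of card ≤ k
  haveI hNE : ∀ k : ℕ, Nonempty {s : Finset X // s.card ≤ k} := fun k => ⟨⟨∅, by simp⟩⟩
  set Φ : ℕ → ℕ → ℝ := fun k n => ⨆ s : {s : Finset X // s.card ≤ k}, ∑ x ∈ s.1, f n x with hΦdef
  have hsumle1 : ∀ (n : ℕ) (s : Finset X), ∑ x ∈ s, f n x ≤ 1 := fun n s =>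
    le_trans (Summable.sum_le_tsum s (fun i _ => hf0 n i) (hfsum n)) (hfle n)
  have hbdd : ∀ k n, BddAbove (Set.range fun s : {s : Finset X // s.card ≤ k} => ∑ x ∈ s.1, f n x) := by
    intro k n
    refine ⟨1, ?_⟩
    rintro r ⟨s, rfl⟩
    exact hsumle1 n s.1
  have hsum_le : ∀ k n (s : Finset X), s.card ≤ k → ∑ x ∈ s, f n x ≤ Φ k n := by
    intro k n s hs
    exact le_ciSup (hbdd k n) ⟨s, hs⟩
  have hΦle1 : ∀ k n, Φ k n ≤ 1 := fun k n => ciSup_le fun s => hsumle1 n s.1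
  have hΦnn : ∀ k n, 0 ≤ Φ k n := fun k n => by
    simpa using hsum_le k n ∅ (by simp)
  have hΦzero : ∀ n, Φ 0 n = 0 := by
    intro n
    refine le_antisymm (ciSup_le fun s => ?_) (hΦnn 0 n)
    have : s.1 = ∅ := Finset.card_eq_zero.mp (Nat.le_zero.mp s.2)
    simp [this]
  have hΦmonok : ∀ k l n, k ≤ l → Φ k n ≤ Φ l n := fun k l n hkl =>
    ciSup_le fun s => hsum_le l n s.1 (le_trans s.2 hkl)
  -- summability of transported terms
  have hsummand0 : ∀ (S : G → ℝ), (∀ g, 0 ≤ S g) → (∀ g, S g ≤ 1) →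
      Summable (fun g => w g * S g) := by
    intro S h0 h1
    refine Summable.of_nonneg_of_le (fun g => mul_nonneg (hw0 g) (h0 g)) (fun g => ?_) hwsum
    calc w g * S g ≤ w g * 1 := mul_le_mul_of_nonneg_left (h1 g) (hw0 g)
      _ = w g := mul_one _
  have hsummand : ∀ (n : ℕ) (t : G → X), Summable (fun g => w g * f n (t g)) := fun n t =>
    hsummand0 _ (fun g => hf0 n _) (fun g => hfb n _)
  have hsummandS : ∀ (n : ℕ) (s : Finset X),
      Summable (fun g => w g * ∑ x ∈ s, f n (act x g⁻¹)) := fun n s =>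
    hsummand0 _ (fun g => Finset.sum_nonneg fun x _ => hf0 n _)
      (fun g =>
        le_trans (le_of_eq (Finset.sum_image (fun x _ y _ h => hactinj g⁻¹ h)).symm)
          (hsumle1 n (s.image (fun x => act x g⁻¹))))
  have htrans_sum : ∀ (n : ℕ) (s : Finset X),
      ∑ x ∈ s, f (n + 1) x = ∑' g, w g * ∑ x ∈ s, f n (act x g⁻¹) := by
    intro n s
    calc ∑ x ∈ s, f (n + 1) x = ∑ x ∈ s, ∑' g, w g * f n (act x g⁻¹) := by
          simp only [hrec]
      _ = ∑' g, ∑ x ∈ s, w g * f n (act x g⁻¹) :=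
          (Summable.tsum_finsetSum (fun x _ => hsummand n _)).symm
      _ = ∑' g, w g * ∑ x ∈ s, f n (act x g⁻¹) := by
          congr 1; funext g; rw [Finset.mul_sum]
  have himage : ∀ (n : ℕ) (g : G) (s : Finset X),
      ∑ x ∈ s, f n (act x g⁻¹) = ∑ y ∈ s.image (fun x => act x g⁻¹), f n y := by
    intro n g s
    rw [Finset.sum_image (fun x _ y _ h => hactinj g⁻¹ h)]
  have hsum_img_le : ∀ k n (g : G) (s : Finset X), s.card ≤ k →
      ∑ x ∈ s, f n (act x g⁻¹) ≤ Φ k n := by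
    intro k n g s hs
    rw [himage n g s]
    exact hsum_le k n _ (le_trans (Finset.card_image_le) hs)
  have hΦanti : ∀ k, Antitone fun n => Φ k n := by
    intro k
    refine antitone_nat_of_succ_le fun n => ?_
    refine ciSup_le fun s => ?_
    rw [htrans_sum n s.1]
    have h1 : ∑' g, w g * ∑ x ∈ s.1, f n (act x g⁻¹) ≤ ∑' g, w g * Φ k n := by
      refine Summable.tsum_le_tsum (fun g => ?_) (hsummandS n _) (hwsum.mul_right _)
      exact mul_le_mul_of_nonneg_left (hsum_img_le k n g s.1 s.2) (hw0 g)
    calc ∑' g, w g * ∑ x ∈ s.1, f n (act x g⁻¹) ≤ ∑' g, w g * Φ k n := h1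
      _ = (∑' g, w g) * Φ k n := tsum_mul_right
      _ = Φ k n := by rw [hwtot, one_mul]
  set b : ℕ → ℝ := fun k => ⨅ n, Φ k n with hbdef
  have hbddb : ∀ k, BddBelow (Set.range fun n => Φ k n) := by
    intro k; exact ⟨0, by rintro r ⟨n, rfl⟩; exact hΦnn k n⟩
  have hb_tend : ∀ k, Tendsto (fun n => Φ k n) atTop (nhds (b k)) := fun k =>
    tendsto_atTop_ciInf (hΦanti k) (hbddb k)
  have hb_le : ∀ k n, b k ≤ Φ k n := fun k n => ciInf_le (hbddb k) n
  have hb0 : ∀ k, 0 ≤ b k := fun k => le_ciInf fun n => hΦnn k n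
  have hble1 : ∀ k, b k ≤ 1 := fun k => le_trans (hb_le k 0) (hΦle1 k 0)
  have hbmono : Monotone b := fun k l hkl => le_ciInf fun n =>
    le_trans (hb_le k n) (hΦmonok k l n hkl)
  have hbz : b 0 = 0 := le_antisymm (le_trans (hb_le 0 0) (le_of_eq (hΦzero 0))) (hb0 0)
  suffices hb1 : b 1 = 0 by
    refine squeeze_zero (fun n => hf0 n x₀) (fun n => by simpa using hsum_le 1 n {x₀} (by simp)) ?_
    rw [← hb1]; exact hb_tend 1
  by_contra hb1ne
  have hs0 : 0 < b 1 := lt_of_le_of_ne (hb0 1) (Ne.symm hb1ne)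
  -- find a level j with a positive jump followed by a strictly smaller jump
  have hδexists : ∃ j : ℕ, 1 ≤ j ∧ 0 < b j - b (j - 1) ∧ b (j + 1) - b j < b j - b (j - 1) := by
    by_contra hno
    push_neg at hno
    have key : ∀ m : ℕ, b 1 ≤ b (m + 1) - b m := by
      intro m
      induction m with
      | zero => simp [hbz]
      | succ m ih =>
        have h1 : 0 < b (m + 1) - b m := lt_of_lt_of_le hs0 ih
        have h2 := hno (m + 1) (by omega)
        rw [Nat.add_sub_cancel] at h2
        exact le_trans ih (h2 h1)
    have hgrow : ∀ m : ℕ, (m : ℝ) * b 1 ≤ b m := by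
      intro m
      induction m with
      | zero => simp [hbz]
      | succ m ih =>
        have h3 := key m
        push_cast
        nlinarith
    obtain ⟨m, hm⟩ := exists_nat_gt (1 / b 1)
    have h2 : (1 : ℝ) < (m : ℝ) * b 1 := by
      rw [div_lt_iff₀ hs0] at hm; linarith
    have h3 := hgrow m
    have h4 := hble1 m
    linarith
  obtain ⟨j, hj1, hδpos, hgaplt⟩ := hδexists
  set δj : ℝ := b j - b (j - 1) with hδjdef
  set δj1 : ℝ := b (j + 1) - b j with hδj1def
  have hδj1nn : 0 ≤ δj1 := sub_nonneg.mpr (hbmono (Nat.le_succ j))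
  set ρ : ℝ := (δj - δj1) / 4 with hρdef
  have hρpos : 0 < ρ := by rw [hρdef]; linarith
  set θhi : ℝ := δj - ρ with hθhidef
  set θlo : ℝ := δj1 + ρ with hθlodef
  have hθlopos : 0 < θlo := by rw [hθlodef]; linarith
  have hθhipos : 0 < θhi := by rw [hθhidef, hρdef]; linarith
  have hθgap : θlo + ρ ≤ θhi := by rw [hθlodef, hθhidef, hρdef]; linarith
  have hθlolthi : θlo < θhi := by linarith
  -- finite "top" sets
  have hfinite : ∀ n, {x : X | θlo < f n x}.Finite := by
    intro n
    have h1 : ∀ᶠ x in Filter.cofinite, f n x < θlo :=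
      Tendsto.eventually_lt_const hθlopos (hfsum n).tendsto_cofinite_zero
    have h2 := Filter.eventually_cofinite.mp h1
    refine h2.subset fun x hx => ?_
    simp only [Set.mem_setOf_eq] at *
    exact not_lt.mpr (le_of_lt hx)
  set TS : ℕ → Finset X := fun n => (hfinite n).toFinset with hTSdef
  have hTSmem : ∀ n x, x ∈ TS n ↔ θlo < f n x := by
    intro n x; rw [hTSdef]; simp [Set.Finite.mem_toFinset]
  -- eventual closeness of Φ to the limits
  have hev1 : ∀ᶠ n in atTop, Φ (j - 1) n < b (j - 1) + ρ / 2 :=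
    Tendsto.eventually_lt_const (by linarith) (hb_tend (j - 1))
  have hev2 : ∀ᶠ n in atTop, Φ (j + 1) n < b (j + 1) + ρ / 2 :=
    Tendsto.eventually_lt_const (by linarith) (hb_tend (j + 1))
  obtain ⟨N₀, hN₀⟩ := eventually_atTop.mp (hev1.and hev2)
  -- key counting fact
  have hkey : ∀ n, N₀ ≤ n → (TS n).card = j ∧ ∀ x ∈ TS n, θhi < f n x := by
    intro n hn
    obtain ⟨h1, h2⟩ := hN₀ n hn
    set THi : Finset X := (TS n).filter (fun x => θhi < f n x) with hTHidef
    have hC3 : j ≤ THi.card := by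
      by_contra hcon
      push_neg at hcon
      have hle : Φ j n ≤ Φ (j - 1) n + θhi := by
        refine ciSup_le fun s => ?_
        by_cases hcase : ∃ m ∈ s.1, f n m ≤ θhi
        · obtain ⟨m, hm, hfm⟩ := hcase
          have heq : ∑ x ∈ s.1.erase m, f n x + f n m = ∑ x ∈ s.1, f n x :=
            Finset.sum_erase_add _ _ hm
          have hcarde : (s.1.erase m).card ≤ j - 1 := by
            rw [Finset.card_erase_of_mem hm]
            have := s.2; omega
          have := hsum_le (j - 1) n _ hcarde
          linarith
        · push_neg at hcase
          have hsub : s.1 ⊆ THi := by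
            intro x hx
            rw [hTHidef, Finset.mem_filter, hTSmem]
            exact ⟨lt_trans hθlolthi (hcase x hx), hcase x hx⟩
          have hc : s.1.card ≤ j - 1 := le_trans (Finset.card_le_card hsub) (by omega)
          exact le_trans (hsum_le (j - 1) n s.1 hc) (by linarith)
      have h3 := hb_le j n
      have hbj : b j = b (j - 1) + δj := by rw [hδjdef]; ring
      linarith
    have hC2 : (TS n).card ≤ j := by
      by_contra hcon
      push_neg at hcon
      have hge : ∀ s : {s : Finset X // s.card ≤ j}, (∑ x ∈ s.1, f n x) ≤ Φ (j + 1) n - θlo := by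
        intro s
        have hex : ∃ x₁ ∈ TS n, x₁ ∉ s.1 := by
          by_contra hc; push_neg at hc
          have : (TS n).card ≤ s.1.card := Finset.card_le_card (fun x hx => hc x hx)
          have := s.2; omega
        obtain ⟨x₁, hx₁T, hx₁s⟩ := hex
        have hcard : (insert x₁ s.1).card ≤ j + 1 := by
          rw [Finset.card_insert_of_notMem hx₁s]
          have := s.2; omega
        have hsum := hsum_le (j + 1) n _ hcard
        rw [Finset.sum_insert hx₁s] at hsum
        have hx₁ := (hTSmem n x₁).mp hx₁T
        linarith
      have h4 : Φ j n ≤ Φ (j + 1) n - θlo := ciSup_le hge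
      have hbj1 : b (j + 1) = b j + δj1 := by rw [hδj1def]; ring
      have h5 := hb_le j n
      linarith
    have hsub : THi ⊆ TS n := Finset.filter_subset _ _
    have hTeq : THi = TS n := Finset.eq_of_subset_of_card_le hsub
      (by have := Finset.card_le_card hsub; omega)
    refine ⟨by have := Finset.card_le_card hsub; omega, ?_⟩
    intro x hx
    rw [← hTeq, hTHidef, Finset.mem_filter] at hx
    exact hx.2
    -- Φ j n is attained by TS n
  have hΦtop : ∀ n, N₀ ≤ n → Φ j n = ∑ x ∈ TS n, f n x := by
    intro n hn
    obtain ⟨hcard, hgap⟩ := hkey n hn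
    refine le_antisymm (ciSup_le fun s => ?_) (hsum_le j n (TS n) (le_of_eq hcard))
    have h1 : ∑ x ∈ s.1 ∩ TS n, f n x + ∑ x ∈ s.1 \ TS n, f n x = ∑ x ∈ s.1, f n x :=
      Finset.sum_inter_add_sum_sdiff _ _ _
    have h2 : ∑ x ∈ TS n ∩ s.1, f n x + ∑ x ∈ TS n \ s.1, f n x = ∑ x ∈ TS n, f n x :=
      Finset.sum_inter_add_sum_sdiff _ _ _
    have hb1 : ∑ x ∈ s.1 \ TS n, f n x ≤ ((s.1 \ TS n).card : ℝ) * θlo := by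
      have := Finset.sum_le_card_nsmul (s.1 \ TS n) (f n) θlo (fun x hx => ?_)
      · simpa [nsmul_eq_mul] using this
      · have hxT := (Finset.mem_sdiff.mp hx).2
        exact le_of_not_gt (fun h => hxT ((hTSmem n x).mpr h))
    have hb2 : ((TS n \ s.1).card : ℝ) * θlo ≤ ∑ x ∈ TS n \ s.1, f n x := by
      have := Finset.card_nsmul_le_sum (TS n \ s.1) (f n) θlo (fun x hx => ?_)
      · simpa [nsmul_eq_mul] using this
      · exact le_of_lt (lt_trans hθlolthi (hgap x (Finset.mem_sdiff.mp hx).1))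
    have hci : (s.1 \ TS n).card ≤ (TS n \ s.1).card := by
      have e1 := Finset.card_sdiff_add_card_inter s.1 (TS n)
      have e2 := Finset.card_sdiff_add_card_inter (TS n) s.1
      have e3 : (s.1 ∩ TS n).card = (TS n ∩ s.1).card := by rw [Finset.inter_comm]
      have := s.2
      omega
    have hb3 : ((s.1 \ TS n).card : ℝ) * θlo ≤ ((TS n \ s.1).card : ℝ) * θlo :=
      mul_le_mul_of_nonneg_right (by exact_mod_cast hci) (le_of_lt hθlopos)
    have e3 : ∑ x ∈ s.1 ∩ TS n, f n x = ∑ x ∈ TS n ∩ s.1, f n x := by rw [Finset.inter_comm]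
    linarith
  -- transport of the top set
  have htransport : ∀ g₀ : G, 0 < w g₀ →
      ∀ᶠ n in atTop, (TS (n + 1)).image (fun x => act x g₀⁻¹) = TS n := by
    intro g₀ hg₀
    have hεtend : Tendsto (fun n => Φ j n - Φ j (n + 1)) atTop (nhds 0) := by
      have h1 : Tendsto (fun n => Φ j (n + 1)) atTop (nhds (b j)) :=
        (hb_tend j).comp (tendsto_add_atTop_nat 1)
      have := (hb_tend j).sub h1
      simpa using this
    have hev : ∀ᶠ n in atTop, Φ j n - Φ j (n + 1) < w g₀ * ρ :=
      Tendsto.eventually_lt_const (by positivity) hεtend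
    filter_upwards [hev, eventually_ge_atTop N₀] with n hn hnN
    by_contra hne
    obtain ⟨hcard1, hgap1⟩ := hkey (n + 1) (by omega)
    obtain ⟨hcard0, hgap0⟩ := hkey n hnN
    set A := (TS (n + 1)).image (fun x => act x g₀⁻¹) with hAdef
    have hcardA : A.card = j := by
      rw [hAdef, Finset.card_image_of_injective _ (hactinj g₀⁻¹)]; exact hcard1
    have hz : ∃ z ∈ A, z ∉ TS n := by
      by_contra hc; push_neg at hc
      exact hne (Finset.eq_of_subset_of_card_le (fun x hx => hc x hx) (by omega))
    have hy : ∃ y ∈ TS n, y ∉ A := by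
      by_contra hc; push_neg at hc
      exact hne (Finset.eq_of_subset_of_card_le (fun x hx => hc x hx) (by omega)).symm
    obtain ⟨z, hzA, hzT⟩ := hz
    obtain ⟨y, hyT, hyA⟩ := hy
    have hAsum : ∑ x ∈ A, f n x ≤ Φ j n - ρ := by
      have h6 : y ∉ A.erase z := fun h => hyA (Finset.mem_of_mem_erase h)
      set s' := insert y (A.erase z) with hs'def
      have hcard' : s'.card ≤ j := by
        rw [hs'def, Finset.card_insert_of_notMem h6, Finset.card_erase_of_mem hzA]
        omega
      have hsum' := hsum_le j n s' hcard'
      have h7 : ∑ x ∈ s', f n x = f n y + ∑ x ∈ A.erase z, f n x := by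
        rw [hs'def, Finset.sum_insert h6]
      have h8 : f n z + ∑ x ∈ A.erase z, f n x = ∑ x ∈ A, f n x :=
        Finset.add_sum_erase _ _ hzA
      have hfy : θhi < f n y := hgap0 y hyT
      have hfz : f n z ≤ θlo := le_of_not_gt (fun h => hzT ((hTSmem n z).mpr h))
      linarith
    have hmain : Φ j (n + 1) ≤ Φ j n - w g₀ * ρ := by
      have e1 : Φ j (n + 1) = ∑ x ∈ TS (n + 1), f (n + 1) x := hΦtop (n + 1) (by omega)
      rw [e1, htrans_sum n (TS (n + 1))]
      have hS : ∀ g, ∑ x ∈ TS (n + 1), f n (act x g⁻¹) ≤ Φ j n := fun g =>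
        hsum_img_le j n g _ (le_of_eq hcard1)
      have hSnn : ∀ g, (0:ℝ) ≤ ∑ x ∈ TS (n + 1), f n (act x g⁻¹) := fun g =>
        Finset.sum_nonneg fun x _ => hf0 n _
      have hSg₀ : ∑ x ∈ TS (n + 1), f n (act x g₀⁻¹) ≤ Φ j n - ρ := by
        rw [himage n g₀ (TS (n + 1))]; exact hAsum
      have hsummable := hsummandS n (TS (n + 1))
      rw [Summable.tsum_eq_add_tsum_ite hsummable g₀]
      have hsumw' : Summable (fun g => if g = g₀ then 0 else w g) := by
        refine Summable.of_nonneg_of_le (fun g => ?_) (fun g => ?_) hwsum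
        · split <;> simp [hw0]
        · split <;> simp [hw0, le_refl]
      have hsuml' : Summable (fun g => if g = g₀ then (0:ℝ) else w g * ∑ x ∈ TS (n + 1), f n (act x g⁻¹)) := by
        refine Summable.of_nonneg_of_le (fun g => ?_) (fun g => ?_) hwsum
        · split
          · exact le_refl 0
          · exact mul_nonneg (hw0 g) (hSnn g)
        · split
          · exact hw0 g
          · exact le_trans
              (mul_le_mul_of_nonneg_left (le_trans (hS g) (hΦle1 j n)) (hw0 g))
              (le_of_eq (mul_one _))
      have hrest : (∑' g, if g = g₀ then (0:ℝ) else w g * ∑ x ∈ TS (n + 1), f n (act x g⁻¹))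
          ≤ (∑' g, if g = g₀ then (0:ℝ) else w g) * Φ j n := by
        rw [← tsum_mul_right]
        refine Summable.tsum_le_tsum (fun g => ?_) hsuml' (hsumw'.mul_right _)
        split
        · simp
        · exact mul_le_mul_of_nonneg_left (hS g) (hw0 g)
      have hw' : (∑' g, if g = g₀ then (0:ℝ) else w g) = 1 - w g₀ := by
        have h9 := Summable.tsum_eq_add_tsum_ite hwsum g₀
        rw [hwtot] at h9
        linarith
      rw [hw'] at hrest
      have h10 : w g₀ * (∑ x ∈ TS (n + 1), f n (act x g₀⁻¹)) ≤ w g₀ * (Φ j n - ρ) :=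
        mul_le_mul_of_nonneg_left hSg₀ (le_of_lt hg₀)
      have h11 : w g₀ * (Φ j n - ρ) + (1 - w g₀) * Φ j n = Φ j n - w g₀ * ρ := by ring
      linarith
    linarith
  -- the top set is eventually constant and invariant
  obtain ⟨N₁, hN₁⟩ := eventually_atTop.mp (htransport 1 hw1)
  set N₂ := max N₀ N₁ with hN₂def
  have himgone : ∀ s : Finset X, s.image (fun x => act x (1:G)⁻¹) = s := by
    intro s
    have : (fun x => act x (1:G)⁻¹) = id := funext fun x => by
      rw [inv_one, hact1]; rfl
    rw [this, Finset.image_id]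
  have hconst : ∀ n, N₂ ≤ n → TS n = TS N₂ := by
    intro n hn
    refine Nat.le_induction rfl ?_ n hn
    intro m hm ih
    have h1 := hN₁ m (le_trans (le_max_right _ _) hm)
    rw [himgone] at h1
    rw [h1, ih]
  set Atop := TS N₂ with hAtopdef
  have hcardAtop : Atop.card = j := (hkey N₂ (le_max_left _ _)).1
  have hAinv : ∀ g₀, 0 < w g₀ → Atop.image (fun x => act x g₀⁻¹) = Atop := by
    intro g₀ hg₀
    obtain ⟨N₃, hN₃⟩ := eventually_atTop.mp (htransport g₀ hg₀)
    have h1 := hN₃ (max N₂ N₃) (le_max_right _ _)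
    rw [hconst ((max N₂ N₃) + 1) (le_trans (le_max_left _ _) (Nat.le_succ _)),
      hconst (max N₂ N₃) (le_max_left _ _)] at h1
    exact h1
  have hmulstep : ∀ g h : G, Atop.image (fun x => act x g) = Atop →
      Atop.image (fun x => act x h) = Atop → Atop.image (fun x => act x (g * h)) = Atop := by
    intro g h hg hh
    calc Atop.image (fun x => act x (g * h))
        = (Atop.image (fun x => act x g)).image (fun x => act x h) := by
          rw [Finset.image_image]
          congr 1
          funext x
          simp [Function.comp, hactm]
      _ = Atop := by rw [hg, hh]
  have hinvstep : ∀ g : G, Atop.image (fun x => act x g) = Atop →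
      Atop.image (fun x => act x g⁻¹) = Atop := by
    intro g hg
    have h1 : (Atop.image (fun x => act x g)).image (fun x => act x g⁻¹)
        = Atop.image (fun x => act x g⁻¹) := by rw [hg]
    rw [Finset.image_image] at h1
    have h2 : ((fun x => act x g⁻¹) ∘ (fun x => act x g)) = id := funext fun x => by
      simp [Function.comp, hactm, hact1]
    rw [h2, Finset.image_id] at h1
    exact h1.symm
  have hKtop : ∀ g : G, Atop.image (fun x => act x g) = Atop := by
    intro g
    refine Subgroup.closure_induction (p := fun g _ => Atop.image (fun x => act x g) = Atop)
      ?_ ?_ ?_ ?_ (hgen g)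
    · intro x hx
      have h1 := hAinv x hx
      have h2 := hinvstep x⁻¹ h1
      simpa using h2
    · simp only [hact1, Finset.image_id']
    · intro x y _ _ hx hy
      exact hmulstep x y hx hy
    · intro x _ hx
      exact hinvstep x hx
  have hAne : Atop.Nonempty := Finset.card_pos.mp (by omega)
  obtain ⟨x', hx'⟩ := hAne
  obtain ⟨y, hy⟩ := Infinite.exists_notMem_finset (α := X) Atop
  obtain ⟨g, hgxy⟩ := htrans x' y
  apply hy
  rw [← hKtop g]
  rw [← hgxy]
  exact Finset.mem_image_of_mem _ hx'

section Walk

open MeasureTheory ProbabilityTheory Filter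

/-- The random walk `w_n = g_1 ⋯ g_n` with increments `inc i` (for `i ≥ 1`), `w_0 = e`. -/
def walk {G Ω : Type*} [Group G] (inc : ℕ → Ω → G) (ω : Ω) : ℕ → G
  | 0 => 1
  | n + 1 => walk inc ω n * inc (n + 1) ω

variable {G Ω : Type*} [Group G] [Countable G] [MeasurableSpace G]
  [MeasurableSingletonClass G] [MeasurableSpace Ω]

lemma walk_succ (inc : ℕ → Ω → G) (ω : Ω) (n : ℕ) :
    walk inc ω (n + 1) = walk inc ω n * inc (n + 1) ω := rfl

lemma meas_mul {f g : Ω → G} (hf : Measurable f) (hg : Measurable g) :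
    Measurable fun ω => f ω * g ω := by
  apply measurable_to_countable'
  intro c
  have h : (fun ω => f ω * g ω) ⁻¹' {c} = ⋃ a : G, (f ⁻¹' {a} ∩ g ⁻¹' {a⁻¹ * c}) := by
    ext ω
    simp only [Set.mem_preimage, Set.mem_singleton_iff, Set.mem_iUnion, Set.mem_inter_iff]
    constructor
    · intro hc
      exact ⟨f ω, rfl, by rw [← hc]; group⟩
    · rintro ⟨a, ha, hb⟩
      rw [ha, hb]; group
  rw [h]
  exact MeasurableSet.iUnion fun a =>
    (hf (measurableSet_singleton a)).inter (hg (measurableSet_singleton _))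

lemma walk_meas (inc : ℕ → Ω → G) (h : ∀ i, Measurable (inc i)) (n : ℕ) :
    Measurable fun ω => walk inc ω n := by
  induction n with
  | zero => exact measurable_const
  | succ n ih => exact meas_mul ih (h (n + 1))

lemma walk_eq_unit (inc : ℕ → Ω → G) (ω : Ω) (n : ℕ) :
    walk inc ω n = walk (fun i (_ : Unit) => inc i ω) () n := by
  induction n with
  | zero => rfl
  | succ n ih => rw [walk_succ, walk_succ, ih]

lemma walk_congr_unit (F F' : ℕ → G) (n : ℕ) (h : ∀ i, 1 ≤ i → i ≤ n → F i = F' i) :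
    walk (fun i (_ : Unit) => F i) () n = walk (fun i (_ : Unit) => F' i) () n := by
  induction n with
  | zero => rfl
  | succ n ih =>
    rw [walk_succ, walk_succ, ih (fun i h1 h2 => h i h1 (by omega)), h (n + 1) (by omega) le_rfl]

lemma pi_msc {ι : Type*} [Countable ι] : MeasurableSingletonClass (ι → G) := by
  constructor
  intro t
  have h : ({t} : Set (ι → G)) = ⋂ i, (fun u : ι → G => u i) ⁻¹' {t i} := by
    ext u
    simp [funext_iff]
  rw [h]
  exact MeasurableSet.iInter fun i => measurable_pi_apply i (measurableSet_singleton _)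

lemma walk_indep (P : Measure Ω) (inc : ℕ → Ω → G) (hmeas : ∀ i, Measurable (inc i))
    (hindep : iIndepFun inc P) (n : ℕ) :
    IndepFun (fun ω => walk inc ω n) (inc (n + 1)) P := by
  classical
  have hdisj : Disjoint (Finset.Icc 1 n) ({n + 1} : Finset ℕ) := by
    simp only [Finset.disjoint_singleton_right, Finset.mem_Icc]
    omega
  have h := hindep.indepFun_finset (Finset.Icc 1 n) {n + 1} hdisj hmeas
  haveI h1 : MeasurableSingletonClass ((↥(Finset.Icc 1 n) : Type) → G) := pi_msc
  haveI h2 : MeasurableSingletonClass ((↥({n+1} : Finset ℕ) : Type) → G) := pi_msc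
  let φ : (↥(Finset.Icc 1 n) → G) → G := fun t =>
    walk (fun i (_ : Unit) => if h : i ∈ Finset.Icc 1 n then t ⟨i, h⟩ else 1) () n
  let ψ : (↥({n+1} : Finset ℕ) → G) → G := fun t => t ⟨n + 1, by simp⟩
  have h3 := h.comp (φ := φ) (ψ := ψ) (measurable_of_countable _) (measurable_of_countable _)
  have e1 : (fun ω => walk inc ω n) = φ ∘ (fun ω (i : ↥(Finset.Icc 1 n)) => inc i ω) := by
    funext ω
    rw [walk_eq_unit]
    exact walk_congr_unit _ _ n (fun i hi1 hi2 => by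
      simp only [Function.comp]
      rw [dif_pos (Finset.mem_Icc.mpr ⟨hi1, hi2⟩)])
  have e2 : inc (n + 1) = ψ ∘ (fun ω (i : ↥({n+1} : Finset ℕ)) => inc i ω) := rfl
  rw [e1, e2]
  exact h3

end Walk

section Prob

open MeasureTheory ProbabilityTheory Filter

variable {G Ω : Type*} [Group G] [Countable G] [MeasurableSpace G]
  [MeasurableSingletonClass G] [MeasurableSpace Ω]

lemma walk_apply_set (P : Measure Ω) (inc : ℕ → Ω → G) (hmeas : ∀ i, Measurable (inc i))
    (n : ℕ) (S : Set G) :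
    P ((fun ω => walk inc ω n) ⁻¹' S)
      = ∑' a : S, P ((fun ω => walk inc ω n) ⁻¹' {(a : G)}) := by
  have h : (fun ω => walk inc ω n) ⁻¹' S = ⋃ a : S, (fun ω => walk inc ω n) ⁻¹' {(a : G)} := by
    ext ω
    simp only [Set.mem_preimage, Set.mem_iUnion, Set.mem_singleton_iff]
    constructor
    · intro hc2
      exact ⟨⟨walk inc ω n, hc2⟩, rfl⟩
    · rintro ⟨a, ha⟩
      rw [ha]; exact a.2
  rw [h]
  refine measure_iUnion ?_ ?_
  · intro a b hab
    refine Set.disjoint_left.mpr fun ω h1 h2 => hab ?_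
    simp only [Set.mem_preimage, Set.mem_singleton_iff] at h1 h2
    exact Subtype.ext (h1 ▸ h2 ▸ rfl)
  · exact fun a => walk_meas inc hmeas n (measurableSet_singleton _)

lemma walk_pmf_rec (P : Measure Ω) (μ : PMF G) (inc : ℕ → Ω → G)
    (hmeas : ∀ i, Measurable (inc i))
    (hindep : iIndepFun inc P)
    (hid : ∀ i, Measure.map (inc i) P = μ.toMeasure) (n : ℕ) (c : G) :
    P ((fun ω => walk inc ω (n + 1)) ⁻¹' {c})
      = ∑' g : G, P ((fun ω => walk inc ω n) ⁻¹' {c * g⁻¹}) * μ g := by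
  have hdecomp : (fun ω => walk inc ω (n + 1)) ⁻¹' {c}
      = ⋃ g : G, ((fun ω => walk inc ω n) ⁻¹' {c * g⁻¹} ∩ (inc (n + 1)) ⁻¹' {g}) := by
    ext ω
    simp only [Set.mem_preimage, Set.mem_singleton_iff, Set.mem_iUnion, Set.mem_inter_iff,
      walk_succ]
    constructor
    · intro hc
      refine ⟨inc (n + 1) ω, ?_, rfl⟩
      rw [← hc]; group
    · rintro ⟨g, h1, h2⟩
      rw [h1, h2]; group
  rw [hdecomp]
  rw [measure_iUnion ?_ ?_]
  · congr 1
    funext g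
    rw [(walk_indep P inc hmeas hindep n).measure_inter_preimage_eq_mul _ _
      (measurableSet_singleton _) (measurableSet_singleton _)]
    congr 1
    calc P (inc (n + 1) ⁻¹' {g}) = Measure.map (inc (n + 1)) P {g} :=
          (Measure.map_apply (hmeas _) (measurableSet_singleton _)).symm
      _ = μ.toMeasure {g} := by rw [hid]
      _ = μ g := PMF.toMeasure_apply_singleton _ _ (measurableSet_singleton _)
  · intro g g' hgg'
    refine Set.disjoint_left.mpr fun ω h1 h2 => hgg' ?_
    have e1 : inc (n + 1) ω = g := h1.2
    have e2 : inc (n + 1) ω = g' := h2.2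
    rw [← e1, ← e2]
  · exact fun g => (walk_meas inc hmeas n (measurableSet_singleton _)).inter
      (hmeas (n + 1) (measurableSet_singleton _))

end Prob

section Decay

open MeasureTheory ProbabilityTheory Filter
open scoped ENNReal

variable {G Ω : Type*} [Group G] [Countable G] [MeasurableSpace G]
  [MeasurableSingletonClass G] [MeasurableSpace Ω]

lemma coset_decay (P : Measure Ω) [IsProbabilityMeasure P]
    (μ : PMF G) (hirr : Subgroup.closure μ.support = ⊤) (he : 0 < μ 1)
    (inc : ℕ → Ω → G) (hmeas : ∀ i, Measurable (inc i))
    (hindep : iIndepFun inc P)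
    (hid : ∀ i, Measure.map (inc i) P = μ.toMeasure)
    (H : Subgroup G) (hH : Infinite (Quotient (QuotientGroup.rightRel H))) (a₀ : G) :
    Tendsto (fun n => P ((fun ω => walk inc ω n) ⁻¹'
      {a : G | Quotient.mk (QuotientGroup.rightRel H) a = Quotient.mk _ a₀}))
      atTop (nhds 0) := by
  classical
  set X := Quotient (QuotientGroup.rightRel H) with hXdef
  let mk : G → X := Quotient.mk (QuotientGroup.rightRel H)
  have hact_wd : ∀ g : G, ∀ a b : G, (QuotientGroup.rightRel H) a b →
      mk (a * g) = mk (b * g) := by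
    intro g a b hab
    refine Quotient.sound ?_
    have h1 : b * a⁻¹ ∈ H := QuotientGroup.rightRel_apply.mp hab
    refine QuotientGroup.rightRel_apply.mpr ?_
    have : b * g * (a * g)⁻¹ = b * a⁻¹ := by group
    rw [this]
    exact h1
  let act : X → G → X := fun x g => Quotient.lift (fun a => mk (a * g)) (hact_wd g) x
  have hactmk : ∀ (a : G) (g : G), act (mk a) g = mk (a * g) := fun a g => rfl
  have hact1 : ∀ x : X, act x 1 = x := by
    intro x
    induction x using Quotient.inductionOn with
    | h a => rw [hactmk]; simp; rfl
  have hactm : ∀ (x : X) (g h : G), act (act x g) h = act x (g * h) := by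
    intro x g h
    induction x using Quotient.inductionOn with
    | h a => rw [hactmk, hactmk, hactmk, mul_assoc]
  have htrans : ∀ x y : X, ∃ g : G, act x g = y := by
    intro x y
    induction x using Quotient.inductionOn with
    | h a =>
      induction y using Quotient.inductionOn with
      | h b =>
        refine ⟨a⁻¹ * b, ?_⟩
        rw [hactmk]
        have h5 : a * (a⁻¹ * b) = b := by group
        rw [h5]
  -- the pushed-forward walk distribution
  let q : ℕ → G → ℝ≥0∞ := fun n a => P ((fun ω => walk inc ω n) ⁻¹' {a})
  let νE : ℕ → X → ℝ≥0∞ := fun n x => ∑' a : {a : G // mk a = x}, q n a.1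
  have hfiber : ∀ n x, P ((fun ω => walk inc ω n) ⁻¹' {a : G | mk a = x}) = νE n x := by
    intro n x
    exact walk_apply_set P inc hmeas n {a : G | mk a = x}
  have htot : ∀ n, ∑' x : X, νE n x ≤ 1 := by
    intro n
    have h1 : ∑' x : X, νE n x = ∑' a : G, q n a := by
      calc ∑' x : X, νE n x = ∑' (p : Σ x : X, {a : G // mk a = x}), q n p.2.1 :=
            (ENNReal.tsum_sigma' (fun p : Σ x : X, {a : G // mk a = x} => q n p.2.1)).symm
        _ = ∑' a : G, q n a := by
            rw [← Equiv.tsum_eq (Equiv.sigmaFiberEquiv mk) (fun a => q n a)]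
            exact tsum_congr fun p => rfl
    rw [h1]
    have h2 : ∑' a : G, q n a = P (⋃ a : G, (fun ω => walk inc ω n) ⁻¹' {a}) := by
      refine (measure_iUnion ?_ ?_).symm
      · intro a b hab
        refine Set.disjoint_left.mpr fun ω h1 h2 => hab ?_
        simp only [Set.mem_preimage, Set.mem_singleton_iff] at h1 h2
        rw [← h1, ← h2]
      · exact fun a => walk_meas inc hmeas n (measurableSet_singleton _)
    rw [h2]
    exact prob_le_one
  have hνle1 : ∀ n x, νE n x ≤ 1 := fun n x => le_trans (ENNReal.le_tsum x) (htot n)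
  have hνne : ∀ n x, νE n x ≠ ⊤ := fun n x => ne_top_of_le_ne_top ENNReal.one_ne_top (hνle1 n x)
  have hμle1 : ∀ g, μ g ≤ 1 := fun g => μ.coe_le_one g
  have hμne : ∀ g : G, μ g ≠ ⊤ := fun g => ne_top_of_le_ne_top ENNReal.one_ne_top (hμle1 g)
  have hrecE : ∀ n x, νE (n + 1) x = ∑' g : G, μ g * νE n (act x g⁻¹) := by
    intro n x
    induction x using Quotient.inductionOn with
    | h c =>
    have h1 : νE (n + 1) (mk c) = ∑' a : {a : G // mk a = mk c}, ∑' g : G, q n (a.1 * g⁻¹) * μ g := by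
      refine tsum_congr fun a => ?_
      exact walk_pmf_rec P μ inc hmeas hindep hid n a.1
    have h1' : νE (n + 1) (Quotient.mk (QuotientGroup.rightRel H) c)
        = ∑' a : {a : G // mk a = mk c}, ∑' g : G, q n (a.1 * g⁻¹) * μ g := h1
    rw [h1', ENNReal.tsum_comm]
    refine tsum_congr fun g => ?_
    have hx : act (Quotient.mk (QuotientGroup.rightRel H) c) g⁻¹ = mk (c * g⁻¹) := hactmk c g⁻¹
    rw [hx]
    let e : {a : G // mk a = mk c} ≃ {b : G // mk b = mk (c * g⁻¹)} :=
      { toFun := fun a => ⟨a.1 * g⁻¹, hact_wd g⁻¹ _ _ (Quotient.exact a.2)⟩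
        invFun := fun b => ⟨b.1 * g, by
          have h3 : mk (b.1 * g) = mk (c * g⁻¹ * g) := hact_wd g _ _ (Quotient.exact b.2)
          have h4 : c * g⁻¹ * g = c := by group
          rw [h3, h4]⟩
        left_inv := fun a => by ext; simp
        right_inv := fun b => by ext; simp }
    calc ∑' a : {a : G // mk a = mk c}, q n (a.1 * g⁻¹) * μ g
        = (∑' a : {a : G // mk a = mk c}, q n (a.1 * g⁻¹)) * μ g := ENNReal.tsum_mul_right
      _ = (∑' b : {b : G // mk b = mk (c * g⁻¹)}, q n b.1) * μ g := by
          congr 1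
          rw [← Equiv.tsum_eq e (fun b => q n b.1)]
          exact tsum_congr fun a => rfl
      _ = μ g * νE n (mk (c * g⁻¹)) := mul_comm _ _
  -- real-valued versions
  let w : G → ℝ := fun g => (μ g).toReal
  let f : ℕ → X → ℝ := fun n x => (νE n x).toReal
  have hw0 : ∀ g, 0 ≤ w g := fun g => ENNReal.toReal_nonneg
  have hwsum : Summable w := ENNReal.summable_toReal (by rw [μ.tsum_coe]; exact ENNReal.one_ne_top)
  have hwtot : ∑' g, w g = 1 := by
    rw [← ENNReal.tsum_toReal_eq hμne, μ.tsum_coe, ENNReal.toReal_one]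
  have hw1 : 0 < w 1 := ENNReal.toReal_pos (ne_of_gt he) (hμne 1)
  have hsupp : {g : G | 0 < w g} = μ.support := by
    ext g
    simp only [Set.mem_setOf_eq, PMF.mem_support_iff]
    rw [ENNReal.toReal_pos_iff]
    constructor
    · rintro ⟨h1, _⟩; exact ne_of_gt h1
    · intro h1; exact ⟨lt_of_le_of_ne zero_le (Ne.symm h1), lt_of_le_of_lt (hμle1 g) ENNReal.one_lt_top⟩
  have hgen : ∀ g : G, g ∈ Subgroup.closure {g : G | 0 < w g} := by
    intro g
    rw [hsupp, hirr]
    trivial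
  have hf0 : ∀ n x, 0 ≤ f n x := fun n x => ENNReal.toReal_nonneg
  have hfsum : ∀ n, Summable (f n) := fun n =>
    ENNReal.summable_toReal (ne_top_of_le_ne_top ENNReal.one_ne_top (htot n))
  have hfle : ∀ n, ∑' x, f n x ≤ 1 := by
    intro n
    rw [← ENNReal.tsum_toReal_eq (hνne n)]
    rw [← ENNReal.toReal_one]
    exact ENNReal.toReal_mono ENNReal.one_ne_top (htot n)
  have hrecR : ∀ n x, f (n + 1) x = ∑' g, w g * f n (act x g⁻¹) := by
    intro n x
    have h1 := congrArg ENNReal.toReal (hrecE n x)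
    rw [ENNReal.tsum_toReal_eq (fun g => ENNReal.mul_ne_top (hμne g) (hνne n _))] at h1
    simpa [ENNReal.toReal_mul] using h1
  have hcore := core_real hH act hact1 hactm htrans w hw0 hwsum hwtot hw1 hgen
    f hf0 hfsum hfle hrecR (mk a₀)
  have hconv : ∀ n, P ((fun ω => walk inc ω n) ⁻¹' {a : G | mk a = mk a₀})
      = ENNReal.ofReal (f n (mk a₀)) := by
    intro n
    rw [hfiber n (mk a₀), ENNReal.ofReal_toReal (hνne n _)]
  have := ENNReal.tendsto_ofReal hcore
  rw [ENNReal.ofReal_zero] at this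
  refine Tendsto.congr (fun n => ?_) this
  exact (hconv n).symm

end Decay

section Main

open MeasureTheory ProbabilityTheory Filter
open scoped ENNReal

variable {G : Type*} [Group G]

lemma conj_eq_iff_coset (g a a₀ : G) :
    a⁻¹ * g * a = a₀⁻¹ * g * a₀ ↔
      Quotient.mk (QuotientGroup.rightRel (Subgroup.centralizer {g})) a
        = Quotient.mk (QuotientGroup.rightRel (Subgroup.centralizer {g})) a₀ := by
  constructor
  · intro hab
    refine Quotient.sound (QuotientGroup.rightRel_apply.mpr ?_)
    rw [Subgroup.mem_centralizer_iff]
    intro h hh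
    rw [Set.mem_singleton_iff] at hh
    subst hh
    calc h * (a₀ * a⁻¹) = a₀ * (a₀⁻¹ * h * a₀) * a⁻¹ := by group
      _ = a₀ * (a⁻¹ * h * a) * a⁻¹ := by rw [← hab]
      _ = (a₀ * a⁻¹) * h := by group
  · intro hq
    have h1 : a₀ * a⁻¹ ∈ Subgroup.centralizer ({g} : Set G) :=
      QuotientGroup.rightRel_apply.mp (Quotient.exact hq)
    have h2 : g * (a₀ * a⁻¹) = (a₀ * a⁻¹) * g :=
      (Subgroup.mem_centralizer_iff.mp h1) g (Set.mem_singleton g)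
    calc a⁻¹ * g * a = a₀⁻¹ * ((a₀ * a⁻¹) * g) * a := by group
      _ = a₀⁻¹ * (g * (a₀ * a⁻¹)) * a := by rw [← h2]
      _ = a₀⁻¹ * g * a₀ := by group

lemma infinite_rightRel_centralizer (g : G)
    (hICC : {h : G | ∃ x : G, x * g * x⁻¹ = h}.Infinite) :
    Infinite (Quotient (QuotientGroup.rightRel (Subgroup.centralizer ({g} : Set G)))) := by
  have hwd : ∀ a b : G, (QuotientGroup.rightRel (Subgroup.centralizer ({g} : Set G))) a b →
      a⁻¹ * g * a = b⁻¹ * g * b := by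
    intro a b hab
    exact (conj_eq_iff_coset g a b).mpr (Quotient.sound hab)
  let Ψ : Quotient (QuotientGroup.rightRel (Subgroup.centralizer ({g} : Set G))) → G :=
    Quotient.lift (fun a => a⁻¹ * g * a) hwd
  by_contra hfin
  rw [not_infinite_iff_finite] at hfin
  have hrange : {h : G | ∃ x : G, x * g * x⁻¹ = h} ⊆ Set.range Ψ := by
    rintro h ⟨x, rfl⟩
    refine ⟨Quotient.mk _ x⁻¹, ?_⟩
    show (x⁻¹)⁻¹ * g * x⁻¹ = x * g * x⁻¹
    rw [inv_inv]
  exact Set.not_infinite.mpr (Set.Finite.subset (Set.finite_range Ψ) hrange) hICC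

end Main

section Final

open MeasureTheory ProbabilityTheory Filter
open scoped ENNReal

/-- An element `a` is `F`-switching if `f₁ a f₂ = f₃ a f₄` forces `f₁ = f₃`, `f₂ = f₄`. -/
def IsSwitchingElt {G : Type*} [Group G] (F : Finset G) (a : G) : Prop :=
  ∀ f₁ ∈ F, ∀ f₂ ∈ F, ∀ f₃ ∈ F, ∀ f₄ ∈ F,
    f₁ * a * f₂ = f₃ * a * f₄ → f₁ = f₃ ∧ f₂ = f₄

/-- on a countable ICC group, for an irreducible `μ` with `μ(e) > 0`
and any finite `F`, the probability that `w_n` is `F`-switching tends to `1`. -/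
theorem prob_walk_switching_tendsto_one
    {G Ω : Type*} [Group G] [Countable G] [MeasurableSpace G] [MeasurableSingletonClass G]
    [MeasurableSpace Ω] (P : Measure Ω) [IsProbabilityMeasure P]
    (hICC : ∀ g : G, g ≠ 1 → {h : G | ∃ x : G, x * g * x⁻¹ = h}.Infinite)
    (μ : PMF G) (hirr : Subgroup.closure μ.support = ⊤) (he : 0 < μ 1)
    (F : Finset G)
    (inc : ℕ → Ω → G) (hmeas : ∀ i, Measurable (inc i))
    (hindep : iIndepFun inc P)
    (hid : ∀ i, Measure.map (inc i) P = μ.toMeasure) :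
    Tendsto (fun n : ℕ => P {ω | IsSwitchingElt F (walk inc ω n)}) atTop (nhds 1) := by
  classical
  set TT : Finset (G × G × G × G) := (F ×ˢ F ×ˢ F ×ˢ F).filter (fun t => t.1 ≠ t.2.2.1)
    with hTTdef
  let Sset : G × G × G × G → Set G := fun t =>
    {a : G | a⁻¹ * (t.2.2.1⁻¹ * t.1) * a = t.2.2.2 * t.2.1⁻¹}
  have hcover : ∀ n : ℕ, {ω : Ω | ¬ IsSwitchingElt F (walk inc ω n)} ⊆
      ⋃ t ∈ TT, (fun ω => walk inc ω n) ⁻¹' (Sset t) := by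
    intro n ω hω
    simp only [Set.mem_setOf_eq, IsSwitchingElt] at hω
    push_neg at hω
    obtain ⟨f₁, h1, f₂, h2, f₃, h3, f₄, h4, heq, hne⟩ := hω
    have hne13 : f₁ ≠ f₃ := by
      intro hc
      refine hne hc ?_
      rw [hc] at heq
      exact mul_left_cancel heq
    have htT : (f₁, f₂, f₃, f₄) ∈ TT := by
      rw [hTTdef, Finset.mem_filter]
      refine ⟨?_, hne13⟩
      simp [Finset.mem_product, h1, h2, h3, h4]
    refine Set.mem_biUnion htT ?_
    show (walk inc ω n)⁻¹ * (f₃⁻¹ * f₁) * walk inc ω n = f₄ * f₂⁻¹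
    have h4' : f₁ * walk inc ω n = f₃ * walk inc ω n * f₄ * f₂⁻¹ := by
      rw [eq_mul_inv_iff_mul_eq]
      exact heq
    calc (walk inc ω n)⁻¹ * (f₃⁻¹ * f₁) * walk inc ω n
        = (walk inc ω n)⁻¹ * f₃⁻¹ * (f₁ * walk inc ω n) := by group
      _ = (walk inc ω n)⁻¹ * f₃⁻¹ * (f₃ * walk inc ω n * f₄ * f₂⁻¹) := by rw [h4']
      _ = f₄ * f₂⁻¹ := by group
  have hterm : ∀ t ∈ TT,
      Tendsto (fun n => P ((fun ω => walk inc ω n) ⁻¹' (Sset t))) atTop (nhds 0) := by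
    intro t ht
    rw [hTTdef, Finset.mem_filter] at ht
    have hg₁ne : t.2.2.1⁻¹ * t.1 ≠ 1 := by
      intro hcontra
      exact ht.2 (inv_mul_eq_one.mp hcontra).symm
    by_cases hempty : Sset t = ∅
    · have hzero : Tendsto (fun _ : ℕ => (0:ℝ≥0∞)) atTop (nhds 0) := tendsto_const_nhds
      refine Tendsto.congr (fun n => ?_) hzero
      rw [hempty]
      simp
    · obtain ⟨a₀, ha₀⟩ := Set.nonempty_iff_ne_empty.mpr hempty
      have ha₀' : a₀⁻¹ * (t.2.2.1⁻¹ * t.1) * a₀ = t.2.2.2 * t.2.1⁻¹ := ha₀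
      have hSeq : Sset t = {a : G |
          Quotient.mk (QuotientGroup.rightRel (Subgroup.centralizer {t.2.2.1⁻¹ * t.1})) a
            = Quotient.mk (QuotientGroup.rightRel (Subgroup.centralizer {t.2.2.1⁻¹ * t.1})) a₀} := by
        ext a
        constructor
        · intro haa
          have haa' : a⁻¹ * (t.2.2.1⁻¹ * t.1) * a = t.2.2.2 * t.2.1⁻¹ := haa
          exact (conj_eq_iff_coset (t.2.2.1⁻¹ * t.1) a a₀).mp (by rw [haa', ha₀'])
        · intro haa
          show a⁻¹ * (t.2.2.1⁻¹ * t.1) * a = t.2.2.2 * t.2.1⁻¹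
          have h5 := (conj_eq_iff_coset (t.2.2.1⁻¹ * t.1) a a₀).mpr haa
          rw [h5]
          exact ha₀'
      have hinf := infinite_rightRel_centralizer (t.2.2.1⁻¹ * t.1) (hICC _ hg₁ne)
      have hdec := coset_decay P μ hirr he inc hmeas hindep hid
        (Subgroup.centralizer {t.2.2.1⁻¹ * t.1}) hinf a₀
      refine Tendsto.congr (fun n => ?_) hdec
      rw [hSeq]
  have hfail : Tendsto (fun n => P {ω : Ω | ¬ IsSwitchingElt F (walk inc ω n)})
      atTop (nhds 0) := by
    have hub : ∀ n, P {ω : Ω | ¬ IsSwitchingElt F (walk inc ω n)}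
        ≤ ∑ t ∈ TT, P ((fun ω => walk inc ω n) ⁻¹' (Sset t)) := fun n =>
      le_trans (measure_mono (hcover n)) (measure_biUnion_finset_le TT _)
    have hsum : Tendsto (fun n => ∑ t ∈ TT, P ((fun ω => walk inc ω n) ⁻¹' (Sset t)))
        atTop (nhds 0) := by
      have h6 := tendsto_finset_sum TT (fun t ht => hterm t ht)
      simpa using h6
    exact tendsto_of_tendsto_of_tendsto_of_le_of_le tendsto_const_nhds hsum
      (fun n => zero_le) hub
  have hcompl : ∀ n, P {ω : Ω | IsSwitchingElt F (walk inc ω n)}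
      = 1 - P {ω : Ω | ¬ IsSwitchingElt F (walk inc ω n)} := by
    intro n
    have h2 : {ω : Ω | IsSwitchingElt F (walk inc ω n)}
        = {ω : Ω | ¬ IsSwitchingElt F (walk inc ω n)}ᶜ := by
      ext ω; simp
    have h3 : MeasurableSet {ω : Ω | ¬ IsSwitchingElt F (walk inc ω n)} := by
      have h7 : {ω : Ω | ¬ IsSwitchingElt F (walk inc ω n)}
          = (fun ω => walk inc ω n) ⁻¹' {a : G | ¬ IsSwitchingElt F a} := rfl
      rw [h7]
      exact walk_meas inc hmeas n ((Set.to_countable _).measurableSet)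
    rw [h2, prob_compl_eq_one_sub h3]
  have hfinal : Tendsto (fun n => 1 - P {ω : Ω | ¬ IsSwitchingElt F (walk inc ω n)})
      atTop (nhds 1) := by
    have hconst : Tendsto (fun _ : ℕ => (1:ℝ≥0∞)) atTop (nhds 1) := tendsto_const_nhds
    have h8 := ENNReal.Tendsto.sub hconst hfail (Or.inl ENNReal.one_ne_top)
    simpa using h8
  exact Tendsto.congr (fun n => (hcompl n).symm) hfinal

end Final
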